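/- Let R be a G-graded ring with unity, M a graded R-bi-module, and P a proper graded ideal of R. Then P ⋉ M is a graded 2-absorbing ideal of the idealization R ⋉ M if and only if P is a graded 2-absorbing ideal of R. -/
import Mathlib

variable {G R M : Type*} [AddCommGroup G] [DecidableEq G] [Ring R]
  [AddCommGroup M] [Module R M] [Module Rᵐᵒᵖ M] [SMulCommClass R Rᵐᵒᵖ M]

/-- `x` is a homogeneous element of the graded ring. -/
def IsHomog {S : Type*} [Ring S] (𝒜 : G → AddSubgroup S) (x : S) : Prop := ∃ g, x ∈ 𝒜 g

/-- A two-sided ideal is graded if it contains all homogeneous components of its elements. -/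
def IsGradedIdeal {S : Type*} [Ring S] (𝒜 : G → AddSubgroup S) [GradedRing 𝒜]
    (P : TwoSidedIdeal S) : Prop :=
  ∀ a ∈ P, ∀ g : G, (DirectSum.decompose 𝒜 a g : S) ∈ P

/-- Graded 2-absorbing: a proper graded ideal `P` such that for homogeneous `x, y, z`,
`xSySz ⊆ P` implies `xy ∈ P` or `yz ∈ P` or `xz ∈ P`. -/
def IsGraded2Absorbing {S : Type*} [Ring S] (𝒜 : G → AddSubgroup S) [GradedRing 𝒜]
    (P : TwoSidedIdeal S) : Prop :=
  P ≠ ⊤ ∧ IsGradedIdeal 𝒜 P ∧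
    ∀ x y z : S, IsHomog 𝒜 x → IsHomog 𝒜 y → IsHomog 𝒜 z →
      (∀ r s : S, x * r * y * s * z ∈ P) →
      x * y ∈ P ∨ y * z ∈ P ∨ x * z ∈ P

/-- Auxiliary: the first component of a homogeneous decomposition in the idealization
agrees with the homogeneous decomposition of the first component. -/
theorem fst_decompose_aux (𝒜 : G → AddSubgroup R) [GradedRing 𝒜]
    (𝒢 : G → AddSubgroup (TrivSqZeroExt R M)) [GradedRing 𝒢]
    (hmem : ∀ g : G, ∀ p ∈ 𝒢 g, p.fst ∈ 𝒜 g)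
    (p : TrivSqZeroExt R M) (g : G) :
    ((DirectSum.decompose 𝒢 p g : TrivSqZeroExt R M)).fst
      = (DirectSum.decompose 𝒜 p.fst g : R) := by
  classical
  have hterm : ∀ i : G, (DirectSum.decompose 𝒜
      ((DirectSum.decompose 𝒢 p i : TrivSqZeroExt R M)).fst g : R)
      = if i = g then ((DirectSum.decompose 𝒢 p i : TrivSqZeroExt R M)).fst else 0 := by
    intro i
    by_cases h : i = g
    · subst h
      rw [if_pos rfl, DirectSum.decompose_of_mem_same 𝒜 (hmem i _ (SetLike.coe_mem _))]
    · rw [if_neg h, DirectSum.decompose_of_mem_ne 𝒜 (hmem i _ (SetLike.coe_mem _)) h]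
  conv_rhs => rw [← DirectSum.sum_support_decompose 𝒢 p]
  rw [TrivSqZeroExt.fst_sum, DirectSum.decompose_sum, DFinsupp.finset_sum_apply,
    AddSubmonoidClass.coe_finset_sum]
  rw [Finset.sum_congr rfl (fun i _ => hterm i), Finset.sum_ite_eq'
    (DFinsupp.support (DirectSum.decompose 𝒢 p)) g
    (fun i => ((DirectSum.decompose 𝒢 p i : TrivSqZeroExt R M)).fst)]
  split
  · rfl
  · rename_i h
    rw [DFinsupp.notMem_support_iff.mp h]
    rfl

/-- Theorem 5.1: for a graded ring `R` with unity, a graded `R`-bi-module `M` and a proper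
graded ideal `P` of `R`, the ideal `P ⋉ M` of the idealization `R ⋉ M` (here
`TrivSqZeroExt R M`, graded by `(R ⋉ M)_g = R_g ⊕ M_g`) is graded 2-absorbing if and only
if `P` is a graded 2-absorbing ideal of `R`. -/
theorem stmt17 (𝒜 : G → AddSubgroup R) [GradedRing 𝒜]
    (ℳ : G → AddSubgroup M) [DirectSum.Decomposition ℳ]
    (hsmul : ∀ g h : G, ∀ r ∈ 𝒜 g, ∀ m ∈ ℳ h, r • m ∈ ℳ (g + h))
    (hsmul' : ∀ g h : G, ∀ r ∈ 𝒜 g, ∀ m ∈ ℳ h, MulOpposite.op r • m ∈ ℳ (h + g))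
    (𝒢 : G → AddSubgroup (TrivSqZeroExt R M))
    (h𝒢 : ∀ g : G, ∀ p : TrivSqZeroExt R M, p ∈ 𝒢 g ↔ p.fst ∈ 𝒜 g ∧ p.snd ∈ ℳ g)
    [GradedRing 𝒢]
    (P : TwoSidedIdeal R) (hProper : P ≠ ⊤) (hGraded : IsGradedIdeal 𝒜 P)
    (Q : TwoSidedIdeal (TrivSqZeroExt R M))
    (hQ : ∀ p : TrivSqZeroExt R M, p ∈ Q ↔ p.fst ∈ P) :
    IsGraded2Absorbing 𝒢 Q ↔ IsGraded2Absorbing 𝒜 P := by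
  have hmem : ∀ g : G, ∀ p ∈ 𝒢 g, TrivSqZeroExt.fst p ∈ 𝒜 g :=
    fun g p hp => ((h𝒢 g p).mp hp).1
  constructor
  · rintro ⟨-, -, habs⟩
    refine ⟨hProper, hGraded, fun x y z hx hy hz h => ?_⟩
    obtain ⟨gx, hgx⟩ := hx
    obtain ⟨gy, hgy⟩ := hy
    obtain ⟨gz, hgz⟩ := hz
    have homog : ∀ g : G, ∀ r ∈ 𝒜 g, IsHomog 𝒢 (TrivSqZeroExt.inl r : TrivSqZeroExt R M) :=
      fun g r hr => ⟨g, (h𝒢 g _).mpr ⟨by simpa using hr, by rw [TrivSqZeroExt.snd_inl]; exact zero_mem _⟩⟩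
    have h' : ∀ r s : TrivSqZeroExt R M,
        TrivSqZeroExt.inl x * r * TrivSqZeroExt.inl y * s * TrivSqZeroExt.inl z ∈ Q := by
      intro r s
      rw [hQ]
      simpa using h r.fst s.fst
    rcases habs _ _ _ (homog gx x hgx) (homog gy y hgy) (homog gz z hgz) h' with h1 | h1 | h1
    · left; rw [hQ] at h1; simpa using h1
    · right; left; rw [hQ] at h1; simpa using h1
    · right; right; rw [hQ] at h1; simpa using h1
  · rintro ⟨hP, hPg, habs⟩
    refine ⟨?_, ?_, ?_⟩
    · intro h
      exact hProper (P.eq_top (by simpa using (hQ 1).mp (h ▸ trivial)))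
    · intro a ha g
      rw [hQ]
      rw [fst_decompose_aux 𝒜 𝒢 hmem a g]
      exact hGraded a.fst ((hQ a).mp ha) g
    · intro x y z hx hy hz h
      obtain ⟨gx, hgx⟩ := hx
      obtain ⟨gy, hgy⟩ := hy
      obtain ⟨gz, hgz⟩ := hz
      have h' : ∀ r s : R, x.fst * r * y.fst * s * z.fst ∈ P := by
        intro r s
        have := (hQ _).mp (h (TrivSqZeroExt.inl r) (TrivSqZeroExt.inl s))
        simpa using this
      rcases habs _ _ _ ⟨gx, hmem gx x hgx⟩ ⟨gy, hmem gy y hgy⟩ ⟨gz, hmem gz z hgz⟩ h'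
        with h1 | h1 | h1
      · left; rw [hQ]; simpa using h1
      · right; left; rw [hQ]; simpa using h1
      · right; right; rw [hQ]; simpa using h1
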